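/- arXiv:1309.0154 — 2 statements merged into one kernel-verified Lean document; each statement's English description precedes it below -/
import Mathlib

section
/- The Fibonacci difference map F̂, sending a real sequence x (with x_{−1}=0) to y with y_k = (f_k/f_{k+1})x_k − (f_{k+1}/f_k)x_{k−1}, is a linear bijection from the space of all real sequences ω to itself, with inverse given by y ↦ (∑_{j=0}^{k} (f_{k+1}²/(f_j f_{j+1})) y_j)_k. -/
open Filter Topology

def fibo : ℕ → ℕ
  | 0 => 1
  | 1 => 1
  | n + 2 => fibo (n + 1) + fibo n

noncomputable def Fhat (x : ℕ → ℝ) : ℕ → ℝ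
  | 0 => (fibo 0 : ℝ) / fibo 1 * x 0
  | k + 1 => (fibo (k + 1) : ℝ) / fibo (k + 2) * x (k + 1)
      - (fibo (k + 2) : ℝ) / fibo (k + 1) * x k

noncomputable def xseq (y : ℕ → ℝ) (k : ℕ) : ℝ :=
  ∑ j ∈ Finset.range (k + 1), ((fibo (k + 1) : ℝ) ^ 2 / ((fibo j : ℝ) * fibo (j + 1))) * y j

/-!
Dividing `y_k = (a_k / a_{k+1}) x_k - (a_{k+1} / a_k) x_{k-1}` by `a_k a_{k+1}` gives the backward
difference `x_k / a_{k+1}² - x_{k-1} / a_k²`, so summing `y_j / (a_j a_{j+1})` over `j ≤ k` telescopes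
to `x_k / a_{k+1}²`; here `a = f`, and any nowhere-vanishing weights would do.
-/

namespace WeightedDifference

variable (a : ℕ → ℝ)

noncomputable def weightedDiff (x : ℕ → ℝ) : ℕ → ℝ
  | 0 => a 0 / a 1 * x 0
  | k + 1 => a (k + 1) / a (k + 2) * x (k + 1) - a (k + 2) / a (k + 1) * x k

noncomputable def weightedSum (y : ℕ → ℝ) (k : ℕ) : ℝ :=
  ∑ j ∈ Finset.range (k + 1), (a (k + 1) ^ 2 / (a j * a (j + 1))) * y j

theorem weightedDiff_isLinearMap : IsLinearMap ℝ (weightedDiff a) := by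
  constructor
  · intro x y
    funext k
    cases k <;> simp only [weightedDiff, Pi.add_apply] <;> ring
  · intro c x
    funext k
    cases k <;> simp only [weightedDiff, Pi.smul_apply, smul_eq_mul] <;> ring

theorem weightedSum_eq_mul_sum (y : ℕ → ℝ) (k : ℕ) :
    weightedSum a y k = a (k + 1) ^ 2 * ∑ j ∈ Finset.range (k + 1), y j / (a j * a (j + 1)) := by
  rw [weightedSum, Finset.mul_sum]
  exact Finset.sum_congr rfl fun j _ => by ring

variable {a}

theorem sum_weightedDiff_div (ha : ∀ n, a n ≠ 0) (x : ℕ → ℝ) (k : ℕ) :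
    ∑ j ∈ Finset.range (k + 1), weightedDiff a x j / (a j * a (j + 1)) = x k / a (k + 1) ^ 2 := by
  induction k with
  | zero =>
    have h0 := ha 0
    have h1 := ha 1
    simp only [zero_add, Finset.sum_range_one, weightedDiff]
    field_simp
  | succ k ih =>
    have h1 := ha (k + 1)
    have h2 := ha (k + 2)
    rw [Finset.sum_range_succ, ih, weightedDiff]
    field_simp
    ring

theorem leftInverse_weightedSum (ha : ∀ n, a n ≠ 0) :
    Function.LeftInverse (weightedSum a) (weightedDiff a) := by
  intro x
  funext k
  have h := ha (k + 1)
  rw [weightedSum_eq_mul_sum, sum_weightedDiff_div ha]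
  field_simp

theorem rightInverse_weightedSum (ha : ∀ n, a n ≠ 0) :
    Function.RightInverse (weightedSum a) (weightedDiff a) := by
  intro y
  funext k
  cases k with
  | zero =>
    have h0 := ha 0
    have h1 := ha 1
    simp only [weightedDiff, weightedSum, zero_add, Finset.sum_range_one]
    field_simp
  | succ k =>
    have h1 := ha (k + 1)
    have h2 := ha (k + 2)
    rw [weightedDiff, weightedSum_eq_mul_sum, weightedSum_eq_mul_sum, Finset.sum_range_succ]
    field_simp
    ring

end WeightedDifference

open WeightedDifference

theorem fibo_pos : ∀ n, 0 < fibo n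
  | 0 => one_pos
  | 1 => one_pos
  | n + 2 => Nat.add_pos_left (fibo_pos (n + 1)) _

theorem Fhat_eq_weightedDiff : Fhat = weightedDiff (fun n => (fibo n : ℝ)) := by
  funext x k
  cases k <;> rfl

theorem xseq_eq_weightedSum : xseq = weightedSum (fun n => (fibo n : ℝ)) := rfl

theorem Fhat_linear_bijection :
    IsLinearMap ℝ Fhat ∧ Function.Bijective Fhat ∧
      Function.LeftInverse xseq Fhat ∧ Function.RightInverse xseq Fhat := by
  have hfibo : ∀ n, (fibo n : ℝ) ≠ 0 := fun n => Nat.cast_ne_zero.mpr (fibo_pos n).ne'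
  have hleft := leftInverse_weightedSum hfibo
  have hright := rightInverse_weightedSum hfibo
  rw [Fhat_eq_weightedDiff, xseq_eq_weightedSum]
  exact ⟨weightedDiff_isLinearMap _, ⟨hleft.injective, hright.surjective⟩, hleft, hright⟩
end

section
/- Let f be the Fibonacci sequence with f_0 = f_1 = 1. For each n ∈ ℕ and real sequence x (x_{−1}=0), a_n x_n = ∑_{k=0}^{n} (f_{n+1}²/(f_k f_{k+1})) a_n y_k, where y_k = (f_k/f_{k+1})x_k − (f_{k+1}/f_k)x_{k−1}. -/
open Filter Topology

/-
With weights w_k = 1 / (f_k f_{k+1}) the transform telescopes: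
w_k (F̂x)_k = x_k / f_{k+1}² - x_{k-1} / f_k², so ∑_{k ≤ n} w_k (F̂x)_k = x_n / f_{n+1}².
Multiplying by f_{n+1}² a_n gives the identity.
-/

theorem fibo_eq_fib (n : ℕ) : fibo n = Nat.fib (n + 1) := by
  induction n using fibo.induct with
  | case1 => rfl
  | case2 => rfl
  | case3 n ih₁ ih₀ => rw [fibo, ih₁, ih₀, Nat.fib_add_two (n := n + 1), add_comm]

theorem fibo_cast_ne_zero (n : ℕ) : (fibo n : ℝ) ≠ 0 := by
  rw [fibo_eq_fib]
  exact_mod_cast (Nat.fib_pos.2 n.succ_pos).ne'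

theorem Fhat_zero_weighted (x : ℕ → ℝ) :
    1 / ((fibo 0 : ℝ) * fibo 1) * Fhat x 0 = x 0 / (fibo 1 : ℝ) ^ 2 := by
  simp [Fhat, fibo]

theorem Fhat_succ_weighted (x : ℕ → ℝ) (k : ℕ) :
    1 / ((fibo (k + 1) : ℝ) * fibo (k + 2)) * Fhat x (k + 1)
      = x (k + 1) / (fibo (k + 2) : ℝ) ^ 2 - x k / (fibo (k + 1) : ℝ) ^ 2 := by
  have h₁ := fibo_cast_ne_zero (k + 1)
  have h₂ := fibo_cast_ne_zero (k + 2)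
  rw [Fhat]
  field_simp

theorem sum_weighted_Fhat (x : ℕ → ℝ) (n : ℕ) :
    ∑ k ∈ Finset.range (n + 1), 1 / ((fibo k : ℝ) * fibo (k + 1)) * Fhat x k
      = x n / (fibo (n + 1) : ℝ) ^ 2 := by
  rw [Finset.sum_range_succ', Fhat_zero_weighted]
  simp only [Fhat_succ_weighted]
  rw [Finset.sum_range_sub (fun k => x k / (fibo (k + 1) : ℝ) ^ 2)]
  ring

theorem term_via_transform (a x : ℕ → ℝ) (n : ℕ) :
    a n * x n
      = ∑ k ∈ Finset.range (n + 1),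
          (fibo (n + 1) : ℝ) ^ 2 / ((fibo k : ℝ) * fibo (k + 1)) * a n * Fhat x k := by
  have hf := fibo_cast_ne_zero (n + 1)
  calc a n * x n
      = (fibo (n + 1) : ℝ) ^ 2 * a n * (x n / (fibo (n + 1) : ℝ) ^ 2) := by field_simp
    _ = (fibo (n + 1) : ℝ) ^ 2 * a n
          * ∑ k ∈ Finset.range (n + 1), 1 / ((fibo k : ℝ) * fibo (k + 1)) * Fhat x k := by
        rw [sum_weighted_Fhat]
    _ = _ := by
        rw [Finset.mul_sum]
        refine Finset.sum_congr rfl fun k _ => ?_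
        ring
end
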